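/- arXiv:0804.3152 — 3 statements merged into one kernel-verified Lean document; each statement's English description precedes it below -/
import Mathlib

section
/- Let Q₁, Q₂ be Markov kernels on Θ, each satisfying the uniform ergodicity bound sup_{|h|≤1} sup_θ |Q_l^j h(θ) − π_l(h)| ≤ 2(1−ε₀)^j with invariant probabilities π₁, π₂, and suppose sup_{|h|≤1} sup_θ |(Q₁ − Q₂)h(θ)| ≤ δ. Then sup_{|h|≤1} |π₁(h) − π₂(h)| ≤ (2/ε₀)·δ, i.e. the total variation distance between the invariant measures is bounded by a constant multiple of the kernel distance. -/
/-!
Fix `h` with `|h| ≤ 1` and set `a j = π₂ (Q₁ʲ h)`, so that `a 0 = π₂ h` and, by uniform ergodicity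
of `Q₁`, `a j → π₁ h`. Since `π₂ = π₂ Q₂`, the increment `a (j + 1) - a j` equals
`π₂ ((Q₁ - Q₂) Q₁ʲ h) = π₂ ((Q₁ - Q₂) (Q₁ʲ h - π₁ h))`, and `Q₁ʲ h - π₁ h` is bounded by `2 (1 - ε₀)ʲ`,
so the increments are at most `2 δ (1 - ε₀)ʲ`. Summing the geometric series gives
`|π₂ h - π₁ h| ≤ 2 δ / ε₀`.
-/

open MeasureTheory ProbabilityTheory

noncomputable def iterKernel {Θ : Type*} [MeasurableSpace Θ]
    (Q : Kernel Θ Θ) : ℕ → Kernel Θ Θ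
  | 0 => Kernel.id
  | n + 1 => Q ∘ₖ iterKernel Q n

open Filter Topology

section BoundedFunctions

variable {α : Type*} [MeasurableSpace α] {f : α → ℝ} {m c : ℝ}

lemma integrable_of_abs_sub_le {μ : Measure α} [IsFiniteMeasure μ] (hf : Measurable f)
    (hfm : ∀ x, |f x - m| ≤ c) : Integrable f μ :=
  .of_bound hf.aestronglyMeasurable (|m| + c) <| ae_of_all _ fun x => by
    rw [Real.norm_eq_abs]
    linarith [abs_sub_abs_le_abs_sub (f x) m, hfm x]

lemma integrable_of_abs_le {μ : Measure α} [IsFiniteMeasure μ] (hf : Measurable f)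
    (hfc : ∀ x, |f x| ≤ c) : Integrable f μ :=
  integrable_of_abs_sub_le (m := 0) hf (by simpa using hfc)

lemma abs_integral_le_of_abs_le {μ : Measure α} [IsProbabilityMeasure μ]
    (hfc : ∀ x, |f x| ≤ c) : |∫ x, f x ∂μ| ≤ c := by
  simpa using norm_integral_le_of_norm_le_const (μ := μ) (f := f) (ae_of_all _ hfc)

lemma abs_integral_sub_le_of_abs_sub_le {μ : Measure α} [IsProbabilityMeasure μ]
    (hf : Measurable f) (hfm : ∀ x, |f x - m| ≤ c) : |∫ x, f x ∂μ - m| ≤ c := by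
  have hint : ∫ x, (f x - m) ∂μ = ∫ x, f x ∂μ - m := by
    simp [integral_sub (integrable_of_abs_sub_le hf hfm) (integrable_const m)]
  exact hint ▸ abs_integral_le_of_abs_le hfm

/-- Since `μ` and `ν` have the same mass, `f` may be replaced by `(f - m) / c`. -/
lemma abs_integral_sub_integral_le_mul {μ ν : Measure α} [IsProbabilityMeasure μ]
    [IsProbabilityMeasure ν] {δ : ℝ}
    (hμν : ∀ h : α → ℝ, Measurable h → (∀ x, |h x| ≤ 1) →
      |(∫ x, h x ∂μ) - ∫ x, h x ∂ν| ≤ δ)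
    (hf : Measurable f) (hc : 0 < c) (hfm : ∀ x, |f x - m| ≤ c) :
    |(∫ x, f x ∂μ) - ∫ x, f x ∂ν| ≤ δ * c := by
  have hnorm : ∀ x, |(f x - m) / c| ≤ 1 := fun x => by
    rw [abs_div, abs_of_pos hc, div_le_one hc]
    exact hfm x
  have hscaled := hμν _ ((hf.sub_const m).div_const c) hnorm
  have hsub : ∀ ρ : Measure α, IsProbabilityMeasure ρ →
      ∫ x, (f x - m) / c ∂ρ = (∫ x, f x ∂ρ - m) / c := fun ρ _ => by
    rw [integral_div, integral_sub (integrable_of_abs_sub_le hf hfm) (integrable_const m)]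
    simp
  rw [hsub μ ‹_›, hsub ν ‹_›, div_sub_div_same, sub_sub_sub_cancel_right, abs_div,
    abs_of_pos hc, div_le_iff₀ hc] at hscaled
  exact hscaled

end BoundedFunctions

section Kernels

variable {α β : Type*} [MeasurableSpace α] [MeasurableSpace β] {g : β → ℝ} {m c : ℝ}

lemma measurable_integral_kernel (κ : Kernel α β) (hg : Measurable g) :
    Measurable fun a => ∫ x, g x ∂(κ a) :=
  hg.stronglyMeasurable.integral_kernel.measurable

lemma integral_bind_kernel {μ : Measure α} [IsProbabilityMeasure μ] {κ : Kernel α β}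
    [IsMarkovKernel κ] (hg : Measurable g) (hgm : ∀ x, |g x - m| ≤ c) :
    ∫ x, g x ∂(μ.bind (fun a => κ a)) = ∫ a, ∫ x, g x ∂(κ a) ∂μ := by
  rw [show μ.bind (fun a => κ a) = κ ∘ₘ μ from rfl, Measure.comp_eq_comp_const_apply]
  exact Kernel.integral_comp (integrable_of_abs_sub_le hg hgm)

variable {Θ : Type*} [MeasurableSpace Θ] {f : Θ → ℝ}

lemma abs_integral_integral_sub_integral_le_of_bind_eq {Q₁ Q₂ : Kernel Θ Θ}
    [IsMarkovKernel Q₁] [IsMarkovKernel Q₂] {π : Measure Θ} [IsProbabilityMeasure π]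
    (hinv : π.bind (fun θ => Q₂ θ) = π) {δ : ℝ}
    (hclose : ∀ h : Θ → ℝ, Measurable h → (∀ θ, |h θ| ≤ 1) → ∀ θ,
      |(∫ x, h x ∂(Q₁ θ)) - ∫ x, h x ∂(Q₂ θ)| ≤ δ)
    (hf : Measurable f) (hc : 0 < c) (hfm : ∀ x, |f x - m| ≤ c) :
    |(∫ θ, ∫ x, f x ∂(Q₁ θ) ∂π) - ∫ x, f x ∂π| ≤ δ * c := by
  have hint : ∀ (κ : Kernel Θ Θ) [IsMarkovKernel κ],
      Integrable (fun θ => ∫ x, f x ∂(κ θ)) π :=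
    fun κ _ => integrable_of_abs_sub_le (measurable_integral_kernel κ hf)
      fun θ => abs_integral_sub_le_of_abs_sub_le hf hfm
  have hπf : ∫ x, f x ∂π = ∫ θ, ∫ x, f x ∂(Q₂ θ) ∂π := by
    conv_lhs => rw [← hinv]
    exact integral_bind_kernel hf hfm
  rw [hπf, ← integral_sub (hint Q₁) (hint Q₂)]
  exact abs_integral_le_of_abs_le fun θ =>
    abs_integral_sub_integral_le_mul (fun h hh hb => hclose h hh hb θ) hf hc hfm

end Kernels

section IterKernel

variable {Θ : Type*} [MeasurableSpace Θ] (Q : Kernel Θ Θ)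

instance isMarkovKernel_iterKernel [IsMarkovKernel Q] : ∀ n, IsMarkovKernel (iterKernel Q n)
  | 0 => by rw [iterKernel]; infer_instance
  | n + 1 => by
    have := isMarkovKernel_iterKernel n
    rw [iterKernel]; infer_instance

lemma iterKernel_succ' (n : ℕ) : iterKernel Q (n + 1) = iterKernel Q n ∘ₖ Q := by
  induction n with
  | zero => simp [iterKernel]
  | succ n ih =>
    calc iterKernel Q (n + 2) = Q ∘ₖ (iterKernel Q n ∘ₖ Q) := by rw [← ih]; rfl
      _ = iterKernel Q (n + 1) ∘ₖ Q := (Kernel.comp_assoc Q (iterKernel Q n) Q).symm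

lemma integral_iterKernel_zero {f : Θ → ℝ} (hf : Measurable f) (θ : Θ) :
    ∫ x, f x ∂(iterKernel Q 0 θ) = f θ :=
  integral_dirac' f θ hf.stronglyMeasurable

lemma integral_iterKernel_succ [IsMarkovKernel Q] {f : Θ → ℝ} (hf : Measurable f) {c : ℝ}
    (hfc : ∀ x, |f x| ≤ c) (n : ℕ) (θ : Θ) :
    ∫ x, f x ∂(iterKernel Q (n + 1) θ) = ∫ y, ∫ x, f x ∂(iterKernel Q n y) ∂(Q θ) := by
  rw [iterKernel_succ']
  exact Kernel.integral_comp (integrable_of_abs_le hf hfc)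

end IterKernel

theorem invariant_measure_stability_general
    {Θ : Type*} [MeasurableSpace Θ] (Q₁ Q₂ : Kernel Θ Θ)
    [IsMarkovKernel Q₁] [IsMarkovKernel Q₂]
    (π₁ π₂ : Measure Θ) [IsProbabilityMeasure π₂]
    (hinv₂ : π₂.bind (fun θ => Q₂ θ) = π₂)
    (ε₀ : ℝ) (hε₀ : ε₀ ∈ Set.Ioo (0 : ℝ) 1)
    (herg₁ : ∀ h : Θ → ℝ, Measurable h → (∀ θ, |h θ| ≤ 1) → ∀ j : ℕ, ∀ θ,
      |(∫ x, h x ∂(iterKernel Q₁ j θ)) - ∫ x, h x ∂π₁| ≤ 2 * (1 - ε₀) ^ j)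
    (δ : ℝ)
    (hclose : ∀ h : Θ → ℝ, Measurable h → (∀ θ, |h θ| ≤ 1) → ∀ θ,
      |(∫ x, h x ∂(Q₁ θ)) - ∫ x, h x ∂(Q₂ θ)| ≤ δ) :
    ∀ h : Θ → ℝ, Measurable h → (∀ θ, |h θ| ≤ 1) →
      |(∫ x, h x ∂π₁) - ∫ x, h x ∂π₂| ≤ (2 / ε₀) * δ := by
  obtain ⟨hε₀pos, hε₀lt⟩ := hε₀
  have hr : 0 < 1 - ε₀ := by linarith
  intro h hh hb
  set f : ℕ → Θ → ℝ := fun j θ => ∫ x, h x ∂(iterKernel Q₁ j θ)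
  have hfm : ∀ j, Measurable (f j) := fun j => measurable_integral_kernel _ hh
  set a : ℕ → ℝ := fun j => ∫ θ, f j θ ∂π₂
  have ha₀ : a 0 = ∫ x, h x ∂π₂ := by
    simp only [a, f, integral_iterKernel_zero Q₁ hh]
  have hlim : Tendsto a atTop (𝓝 (∫ x, h x ∂π₁)) := by
    refine tendsto_iff_dist_tendsto_zero.2 <| squeeze_zero (fun _ => dist_nonneg)
      (fun j => abs_integral_sub_le_of_abs_sub_le (hfm j) (herg₁ h hh hb j)) ?_
    simpa using
      (tendsto_pow_atTop_nhds_zero_of_lt_one hr.le (by linarith : 1 - ε₀ < 1)).const_mul 2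
  have hstep : ∀ j, dist (a j) (a (j + 1)) ≤ 2 * δ * (1 - ε₀) ^ j := fun j => by
    rw [dist_comm, Real.dist_eq]
    simp only [a, f, integral_iterKernel_succ Q₁ hh hb]
    linarith [abs_integral_integral_sub_integral_le_of_bind_eq hinv₂ hclose (hfm j)
      (by positivity : 0 < 2 * (1 - ε₀) ^ j) (herg₁ h hh hb j)]
  have := dist_le_of_le_geometric_of_tendsto₀ (1 - ε₀) (2 * δ) (by linarith) hstep hlim
  rw [ha₀, Real.dist_eq, abs_sub_comm, sub_sub_cancel] at this
  linarith [this, show 2 * δ / ε₀ = 2 / ε₀ * δ by ring]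

theorem invariant_measure_stability
    {Θ : Type*} [MeasurableSpace Θ] (Q₁ Q₂ : Kernel Θ Θ)
    [IsMarkovKernel Q₁] [IsMarkovKernel Q₂]
    (π₁ π₂ : Measure Θ) [IsProbabilityMeasure π₁] [IsProbabilityMeasure π₂]
    (hinv₁ : π₁.bind (fun θ => Q₁ θ) = π₁) (hinv₂ : π₂.bind (fun θ => Q₂ θ) = π₂)
    (ε₀ : ℝ) (hε₀ : ε₀ ∈ Set.Ioo (0 : ℝ) 1)
    (herg₁ : ∀ h : Θ → ℝ, Measurable h → (∀ θ, |h θ| ≤ 1) → ∀ j : ℕ, ∀ θ,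
      |(∫ x, h x ∂(iterKernel Q₁ j θ)) - ∫ x, h x ∂π₁| ≤ 2 * (1 - ε₀) ^ j)
    (herg₂ : ∀ h : Θ → ℝ, Measurable h → (∀ θ, |h θ| ≤ 1) → ∀ j : ℕ, ∀ θ,
      |(∫ x, h x ∂(iterKernel Q₂ j θ)) - ∫ x, h x ∂π₂| ≤ 2 * (1 - ε₀) ^ j)
    (δ : ℝ) (hδ : 0 ≤ δ)
    (hclose : ∀ h : Θ → ℝ, Measurable h → (∀ θ, |h θ| ≤ 1) → ∀ θ,
      |(∫ x, h x ∂(Q₁ θ)) - ∫ x, h x ∂(Q₂ θ)| ≤ δ) :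
    ∀ h : Θ → ℝ, Measurable h → (∀ θ, |h θ| ≤ 1) →
      |(∫ x, h x ∂π₁) - ∫ x, h x ∂π₂| ≤ (2 / ε₀) * δ :=
  invariant_measure_stability_general Q₁ Q₂ π₁ π₂ hinv₂ ε₀ hε₀ herg₁ δ hclose
end

section
/- Let c_{n+1}(i) = c_n(i) + γ_n · e^{E(X_{n+1},θ^(i)) − c_n(i)} / ∑_{j=1}^d e^{E(X_{n+1},θ^(j)) − c_n(j)} with γ_n > 0 and m ≤ E ≤ M. Define ω_n(i) = e^{c_n(i)}/∑_j e^{c_n(j)}. Then for each i, |ω_{n+1}(i) − ω_n(i)| ≤ C·γ_n for a constant C depending only on d (in fact C can be taken independent of m, M since the update increments of c_n are in [0, γ_n]). -/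
open Real

theorem wang_landau_weight_increment (d : ℕ) (hd : 0 < d) :
    ∃ C : ℝ, 0 < C ∧ ∀ (m M : ℝ) (c : Fin d → ℝ) (γ : ℝ) (e : Fin d → ℝ),
      0 < γ → (∀ i, m ≤ e i ∧ e i ≤ M) →
      ∀ c' : Fin d → ℝ,
      (∀ i, c' i = c i + γ * (exp (e i - c i) / ∑ j, exp (e j - c j))) →
      ∀ ω ω' : Fin d → ℝ,
      (∀ i, ω i = exp (c i) / ∑ j, exp (c j)) →
      (∀ i, ω' i = exp (c' i) / ∑ j, exp (c' j)) →
      ∀ i, |ω' i - ω i| ≤ C * γ := by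
  refine ⟨3, by norm_num, ?_⟩
  intro m M c γ e hγ _ c' hc' ω ω' hω hω' i
  have hEpos : (0:ℝ) < ∑ j, exp (e j - c j) :=
    Finset.sum_pos (fun j _ => exp_pos _) ⟨i, Finset.mem_univ i⟩
  have hδ : ∀ j, 0 ≤ c' j - c j ∧ c' j - c j ≤ γ := by
    intro j
    have h1 : exp (e j - c j) ≤ ∑ k, exp (e k - c k) :=
      Finset.single_le_sum (f := fun k => exp (e k - c k))
        (fun k _ => (exp_pos _).le) (Finset.mem_univ j)
    have h2 : exp (e j - c j) / ∑ k, exp (e k - c k) ≤ 1 := by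
      rw [div_le_one hEpos]; exact h1
    have h3 : 0 ≤ exp (e j - c j) / ∑ k, exp (e k - c k) :=
      div_nonneg (exp_pos _).le hEpos.le
    rw [hc' j]
    constructor
    · nlinarith
    · nlinarith
  set S := ∑ j, exp (c j) with hS
  set S' := ∑ j, exp (c' j) with hS'
  have hSpos : 0 < S := Finset.sum_pos (fun j _ => exp_pos _) ⟨i, Finset.mem_univ i⟩
  have hS'pos : 0 < S' := Finset.sum_pos (fun j _ => exp_pos _) ⟨i, Finset.mem_univ i⟩
  have hSS' : S ≤ S' :=
    Finset.sum_le_sum fun j _ => exp_le_exp.2 (by linarith [(hδ j).1])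
  have hS'le : S' ≤ exp γ * S := by
    rw [hS', hS, Finset.mul_sum]
    refine Finset.sum_le_sum fun j _ => ?_
    rw [← Real.exp_add]
    exact exp_le_exp.2 (by linarith [(hδ j).2])
  have haS : exp (c i) ≤ S :=
    Finset.single_le_sum (f := fun k => exp (c k))
      (fun k _ => (exp_pos _).le) (Finset.mem_univ i)
  have ha'S' : exp (c' i) ≤ S' :=
    Finset.single_le_sum (f := fun k => exp (c' k))
      (fun k _ => (exp_pos _).le) (Finset.mem_univ i)
  have haa' : exp (c i) ≤ exp (c' i) := exp_le_exp.2 (by linarith [(hδ i).1])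
  have ha'le : exp (c' i) ≤ exp (c i) * exp γ := by
    rw [← Real.exp_add]
    exact exp_le_exp.2 (by linarith [(hδ i).2])
  clear_value S S'
  have hexpγ : 1 + γ ≤ exp γ := by linarith [Real.add_one_le_exp γ]
  have hegpos : (0:ℝ) < exp γ := exp_pos γ
  have hapos : (0:ℝ) < exp (c i) := exp_pos _
  have ha'pos : (0:ℝ) < exp (c' i) := exp_pos _
  have hkey : exp γ - 1 ≤ γ * exp γ := by
    have h := Real.add_one_le_exp (-γ)
    rw [Real.exp_neg] at h
    have h2 : (-γ + 1) * exp γ ≤ (exp γ)⁻¹ * exp γ :=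
      mul_le_mul_of_nonneg_right h hegpos.le
    rw [inv_mul_cancel₀ hegpos.ne'] at h2
    nlinarith
  rw [hω, hω', abs_le]
  constructor
  · have h1 : exp (c i) / (exp γ * S) ≤ exp (c' i) / S' :=
      div_le_div₀ ha'pos.le haa' hS'pos hS'le
    have h2 : exp (c i) / S - exp (c i) / (exp γ * S) ≤ γ := by
      rw [div_sub_div _ _ hSpos.ne' (by positivity), div_le_iff₀ (by positivity)]
      have expand : exp (c i) * (exp γ * S) - S * exp (c i)
          = exp (c i) * S * (exp γ - 1) := by ring
      rw [expand]
      have step1 : exp (c i) * S * (exp γ - 1) ≤ S * S * (exp γ - 1) := by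
        have hg1 : 0 ≤ exp γ - 1 := by linarith
        nlinarith
      have step2 : S * S * (exp γ - 1) ≤ S * S * (γ * exp γ) := by
        have := mul_pos hSpos hSpos
        nlinarith
      have eq2 : S * S * (γ * exp γ) = γ * (S * (exp γ * S)) := by ring
      linarith [eq2 ▸ step2]
    linarith
  · rcases le_or_gt γ 1 with hγ1 | hγ1
    · have h1 : exp (c' i) / S' ≤ exp (c i) * exp γ / S :=
        div_le_div₀ (by positivity) ha'le hSpos hSS'
      have h2 : exp (c i) * exp γ / S - exp (c i) / S ≤ exp γ - 1 := by
        rw [div_sub_div_same, div_le_iff₀ hSpos]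
        have expand : exp (c i) * exp γ - exp (c i) = exp (c i) * (exp γ - 1) := by
          ring
        rw [expand]
        have hg1 : 0 ≤ exp γ - 1 := by linarith
        nlinarith
      have h3 : exp γ - 1 ≤ 3 * γ := by
        have h4 : γ * exp γ ≤ γ * exp 1 :=
          mul_le_mul_of_nonneg_left (exp_le_exp.2 hγ1) hγ.le
        have he1 : exp 1 < 3 := by
          have := Real.exp_one_lt_d9
          linarith
        nlinarith
      linarith
    · have h1 : exp (c' i) / S' ≤ 1 := by rw [div_le_one hS'pos]; exact ha'S'
      have h0 : 0 ≤ exp (c i) / S := by positivity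
      linarith
end

section
/- Let Λ_c(x,i) ∝ e^{E(x,θ^(i)) − c(i)} be a probability distribution on X × {1,…,d} (X finite, λ counting measure). The marginal of Λ_c on {1,…,d} is uniform if and only if c(i) − log Z(θ^(i)) is constant in i, where Z(θ^(i)) = ∑_x e^{E(x,θ^(i))}. -/
/-!
The marginal of `Λ` at `i` is `w i / ∑ j, w j` with `w i = Z(θ⁽ⁱ⁾) e^{-c(i)} = e^{-(c(i) - log Z(θ⁽ⁱ⁾))}`.
For nonzero weights, normalizing gives the uniform distribution exactly when the weights are
all equal, and since `t ↦ e^{-t}` is injective this means `c(i) - log Z(θ⁽ⁱ⁾)` is constant.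
-/

open Real

theorem forall_div_sum_eq_one_div_card_iff {ι 𝕜 : Type*} [Fintype ι] [Field 𝕜] [CharZero 𝕜]
    {w : ι → 𝕜} (hw : ∀ i, w i ≠ 0) :
    (∀ i, w i / ∑ j, w j = 1 / Fintype.card ι) ↔ ∃ K, ∀ i, w i = K := by
  constructor
  · intro h
    refine ⟨(∑ j, w j) / Fintype.card ι, fun i => ?_⟩
    have : Nonempty ι := ⟨i⟩
    have hcard : (Fintype.card ι : 𝕜) ≠ 0 := by simp
    have hsum : ∑ j, w j ≠ 0 := fun h0 => by
      simpa [h0, hcard] using (h i).symm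
    have hi := h i
    rw [div_eq_div_iff hsum hcard] at hi
    rw [eq_div_iff hcard]
    linear_combination hi
  · rintro ⟨K, hK⟩ i
    have : Nonempty ι := ⟨i⟩
    have hK0 : K ≠ 0 := hK i ▸ hw i
    simp only [hK, Finset.sum_const, Finset.card_univ, nsmul_eq_mul]
    field_simp

theorem exists_forall_comp_eq_iff {ι α β : Type*} {g : α → β} {h : β → α}
    (hgh : Function.LeftInverse h g) (f : ι → α) :
    (∃ K, ∀ i, g (f i) = K) ↔ ∃ K, ∀ i, f i = K :=
  ⟨fun ⟨K, hK⟩ => ⟨h K, fun i => by rw [← hK i, hgh]⟩,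
    fun ⟨K, hK⟩ => ⟨g K, fun i => by rw [hK]⟩⟩

theorem sum_exp_sub_eq_exp_neg_sub_log {X : Type*} [Fintype X] [Nonempty X] (f : X → ℝ) (c : ℝ) :
    ∑ x, exp (f x - c) = exp (-(c - log (∑ x, exp (f x)))) := by
  have hZ : 0 < ∑ x, exp (f x) := Finset.sum_pos (fun x _ => exp_pos _) Finset.univ_nonempty
  rw [neg_sub, exp_sub, exp_log hZ, Finset.sum_div]
  simp only [exp_sub]

theorem flat_histogram_characterization_general
    {X : Type*} [Fintype X] [Nonempty X]
    (d : ℕ) (e : X → Fin d → ℝ) (c : Fin d → ℝ)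
    (Λ : X → Fin d → ℝ)
    (hΛ : ∀ x i, Λ x i =
      exp (e x i - c i) / (∑ x' : X, ∑ j, exp (e x' j - c j))) :
    (∀ i, ∑ x : X, Λ x i = 1 / d) ↔
    (∃ K : ℝ, ∀ i, c i - log (∑ x : X, exp (e x i)) = K) := by
  set w : Fin d → ℝ := fun i => exp (-(c i - log (∑ x : X, exp (e x i))))
  have hweight : ∀ i, ∑ x : X, exp (e x i - c i) = w i := fun i =>
    sum_exp_sub_eq_exp_neg_sub_log (e · i) (c i)
  have hmarginal : ∀ i, ∑ x : X, Λ x i = w i / ∑ j, w j := fun i => by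
    simp only [hΛ, ← Finset.sum_div, Finset.sum_comm (γ := X), hweight]
  have hexp : Function.LeftInverse (fun s => -log s) (fun t => exp (-t)) := fun t => by simp
  simp only [hmarginal]
  rw [show (d : ℝ) = Fintype.card (Fin d) by simp,
    forall_div_sum_eq_one_div_card_iff fun i => (exp_pos _).ne', exists_forall_comp_eq_iff hexp]

theorem flat_histogram_characterization
    {X : Type*} [Fintype X] [Nonempty X]
    (d : ℕ) (hd : 0 < d) (e : X → Fin d → ℝ) (c : Fin d → ℝ)
    (Λ : X → Fin d → ℝ)
    (hΛ : ∀ x i, Λ x i =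
      exp (e x i - c i) / (∑ x' : X, ∑ j, exp (e x' j - c j))) :
    (∀ i, ∑ x : X, Λ x i = 1 / d) ↔
    (∃ K : ℝ, ∀ i, c i - log (∑ x : X, exp (e x i)) = K) :=
  flat_histogram_characterization_general d e c Λ hΛ
end
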